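/- For every finite graph G = (V, E) and every k ∈ ℕ, if the formula f(V,E,k) is an atomic-level instance of a normal binary tautology, then G has a vertex cover of size at most k. -/

import Mathlib

namespace CirquentCalc

/-- Formulas: literals (negation applied only to atoms), ∧, ∨. -/
inductive Fml where
  | pos : ℕ → Fml
  | neg : ℕ → Fml
  | and : Fml → Fml → Fml
  | or : Fml → Fml → Fml
deriving DecidableEq

namespace Fml

/-- Negation (pushed to atoms, as ¬ applies only to atoms). -/
def negate : Fml → Fml
  | pos n => neg n
  | neg n => pos n
  | and a b => or a.negate b.negate
  | or a b => and a.negate b.negate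

/-- Substitution extended homomorphically. -/
def subst (σ : ℕ → Fml) : Fml → Fml
  | pos n => σ n
  | neg n => (σ n).negate
  | and a b => and (a.subst σ) (b.subst σ)
  | or a b => or (a.subst σ) (b.subst σ)

/-- Classical evaluation under a truth assignment. -/
def eval (v : ℕ → Bool) : Fml → Bool
  | pos n => v n
  | neg n => !(v n)
  | and a b => a.eval v && b.eval v
  | or a b => a.eval v || b.eval v

/-- Number of positive occurrences of atom `a`. -/
def cPos (a : ℕ) : Fml → ℕ
  | pos n => if n = a then 1 else 0
  | neg _ => 0
  | and f g => f.cPos a + g.cPos a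
  | or f g => f.cPos a + g.cPos a

/-- Number of negative occurrences of atom `a`. -/
def cNeg (a : ℕ) : Fml → ℕ
  | pos _ => 0
  | neg n => if n = a then 1 else 0
  | and f g => f.cNeg a + g.cNeg a
  | or f g => f.cNeg a + g.cNeg a

/-- Total number of positive occurrences of atoms. -/
def posOcc : Fml → ℕ
  | pos _ => 1
  | neg _ => 0
  | and f g => f.posOcc + g.posOcc
  | or f g => f.posOcc + g.posOcc

/-- Length: total number of occurrences of literals and connectives. -/
def len : Fml → ℕ
  | pos _ => 1
  | neg _ => 1
  | and f g => f.len + g.len + 1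
  | or f g => f.len + g.len + 1

/-- Number of occurrences of ∧. -/
def nAnd : Fml → ℕ
  | pos _ => 0
  | neg _ => 0
  | and f g => f.nAnd + g.nAnd + 1
  | or f g => f.nAnd + g.nAnd

/-- Number of occurrences of ∨. -/
def nOr : Fml → ℕ
  | pos _ => 0
  | neg _ => 0
  | and f g => f.nOr + g.nOr
  | or f g => f.nOr + g.nOr + 1

end Fml

def Tautology (A : Fml) : Prop := ∀ v, A.eval v = true

/-- No atom has more than two occurrences. -/
def Binary (A : Fml) : Prop := ∀ a, A.cPos a + A.cNeg a ≤ 2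

/-- Whenever an atom occurs twice, one occurrence is positive and one negative. -/
def Normal (A : Fml) : Prop := ∀ a, A.cPos a ≤ 1 ∧ A.cNeg a ≤ 1

def AtomicLevel (σ : ℕ → Fml) : Prop := ∀ n, ∃ m, σ n = Fml.pos m

/-- `F` is an instance of `B`: σ(B) = F for some substitution σ. -/
def InstanceOf (F B : Fml) : Prop := ∃ σ, B.subst σ = F

/-- `F` is an atomic-level instance of `B`. -/
def AtomicInstanceOf (F B : Fml) : Prop := ∃ σ, AtomicLevel σ ∧ B.subst σ = F

/-- A cirquent: a pool of (occurrences of) formulas, and a list of ogroups,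
each an (index-)set of oformulas of the pool. -/
structure Cirquent where
  pool : List Fml
  groups : List (Finset ℕ)

def emptyCirquent : Cirquent := ⟨[], []⟩

def idCirquent (F : Fml) : Cirquent := ⟨[F.negate, F], [{0, 1}]⟩

/-- The cirquent with pool ⟨F⟩ and one ogroup containing F. -/
def fmlCirquent (F : Fml) : Cirquent := ⟨[F], [{0}]⟩

/-- Index renaming swapping `i` and `i+1`. -/
def swapIdx (i : ℕ) : ℕ → ℕ := fun j => if j = i then i + 1 else if j = i + 1 then i else j

/-- Index renaming when a new oformula is inserted at position `i`. -/
def insShift (i : ℕ) : ℕ → ℕ := fun j => if j < i then j else j + 1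

/-- Index renaming when the oformulas at positions `i`, `i+1` are merged into one at `i`. -/
def mergeIdx (i : ℕ) : ℕ → ℕ := fun j => if j ≤ i then j else j - 1

/-- Mix: placing the two premise cirquents side by side. -/
def MixStep (A B C : Cirquent) : Prop :=
  C.pool = A.pool ++ B.pool ∧
  C.groups = A.groups ++ B.groups.map (Finset.image (· + A.pool.length))

/-- Oformula exchange: swap two adjacent oformulas, preserving containment. -/
def OfExchStep (P C : Cirquent) : Prop :=
  ∃ (l₁ l₂ : List Fml) (F G : Fml),
    P.pool = l₁ ++ F :: G :: l₂ ∧ C.pool = l₁ ++ G :: F :: l₂ ∧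
    C.groups = P.groups.map (Finset.image (swapIdx l₁.length))

/-- Ogroup exchange: swap two adjacent ogroups. -/
def OgExchStep (P C : Cirquent) : Prop :=
  C.pool = P.pool ∧
  ∃ (g₁ g₂ : List (Finset ℕ)) (Γ Δ : Finset ℕ),
    P.groups = g₁ ++ Γ :: Δ :: g₂ ∧ C.groups = g₁ ++ Δ :: Γ :: g₂

/-- Pool weakening: insert a new oformula, contained in no ogroup. -/
def PoolWeakStep (P C : Cirquent) : Prop :=
  ∃ (l₁ l₂ : List Fml) (F : Fml),
    P.pool = l₁ ++ l₂ ∧ C.pool = l₁ ++ F :: l₂ ∧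
    C.groups = P.groups.map (Finset.image (insShift l₁.length))

/-- Ogroup weakening: add a new arc between a pre-existing ogroup and oformula. -/
def OgWeakStep (P C : Cirquent) : Prop :=
  C.pool = P.pool ∧
  ∃ (g₁ g₂ : List (Finset ℕ)) (Γ : Finset ℕ) (j : ℕ),
    j < P.pool.length ∧ j ∉ Γ ∧
    P.groups = g₁ ++ Γ :: g₂ ∧ C.groups = g₁ ++ insert j Γ :: g₂

/-- Downward duplication: replace an ogroup by two adjacent copies of it. -/
def DupDownStep (P C : Cirquent) : Prop :=
  C.pool = P.pool ∧
  ∃ (g₁ g₂ : List (Finset ℕ)) (Γ : Finset ℕ),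
    P.groups = g₁ ++ Γ :: g₂ ∧ C.groups = g₁ ++ Γ :: Γ :: g₂

/-- Upward duplication: the converse of downward duplication. -/
def DupUpStep (P C : Cirquent) : Prop :=
  C.pool = P.pool ∧
  ∃ (g₁ g₂ : List (Finset ℕ)) (Γ : Finset ℕ),
    P.groups = g₁ ++ Γ :: Γ :: g₂ ∧ C.groups = g₁ ++ Γ :: g₂

/-- ∨-introduction: merge two adjacent oformulas F, G into F ∨ G. -/
def OrIntroStep (P C : Cirquent) : Prop :=
  ∃ (l₁ l₂ : List Fml) (F G : Fml),
    P.pool = l₁ ++ F :: G :: l₂ ∧ C.pool = l₁ ++ (Fml.or F G) :: l₂ ∧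
    C.groups = P.groups.map (Finset.image (mergeIdx l₁.length))

/-- The merging of the ogroup list in ∧-introduction: no ogroup contains both `i`
and `i+1`; every ogroup containing `i` is immediately followed by one containing
`i+1` and vice versa; such pairs are merged. -/
inductive AndMerge (i : ℕ) : List (Finset ℕ) → List (Finset ℕ) → Prop where
  | nil : AndMerge i [] []
  | skip {Γ : Finset ℕ} {l l' : List (Finset ℕ)} :
      i ∉ Γ → (i + 1) ∉ Γ → AndMerge i l l' → AndMerge i (Γ :: l) (Γ :: l')
  | merge {Γ Δ : Finset ℕ} {l l' : List (Finset ℕ)} :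
      i ∈ Γ → (i + 1) ∉ Γ → (i + 1) ∈ Δ → i ∉ Δ →
      AndMerge i l l' → AndMerge i (Γ :: Δ :: l) ((Γ ∪ Δ) :: l')

/-- ∧-introduction. -/
def AndIntroStep (P C : Cirquent) : Prop :=
  ∃ (l₁ l₂ : List Fml) (F G : Fml) (merged : List (Finset ℕ)),
    P.pool = l₁ ++ F :: G :: l₂ ∧ C.pool = l₁ ++ (Fml.and F G) :: l₂ ∧
    AndMerge l₁.length P.groups merged ∧
    C.groups = merged.map (Finset.image (mergeIdx l₁.length))

inductive RuleName where
  | emptyAx | idAx | mix | ofExch | ogExch | poolWeak | ogWeak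
  | dupDown | dupUp | orIntro | andIntro
deriving DecidableEq

/-- The unary (one-premise) rules, by name. -/
def unRel : RuleName → Cirquent → Cirquent → Prop
  | .ofExch => OfExchStep
  | .ogExch => OgExchStep
  | .poolWeak => PoolWeakStep
  | .ogWeak => OgWeakStep
  | .dupDown => DupDownStep
  | .dupUp => DupUpStep
  | .orIntro => OrIntroStep
  | .andIntro => AndIntroStep
  | _ => fun _ _ => False

/-- Proof trees: each node is labeled by its cirquent and the rule used. -/
inductive PTree where
  | leaf (C : Cirquent) (r : RuleName)
  | un (C : Cirquent) (r : RuleName) (p : PTree)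
  | bin (C : Cirquent) (r : RuleName) (p q : PTree)

namespace PTree

def concl : PTree → Cirquent
  | leaf C _ => C
  | un C _ _ => C
  | bin C _ _ _ => C

/-- Validity: each node follows from its children by the named rule. -/
def Valid : PTree → Prop
  | leaf C r =>
      (r = .emptyAx ∧ C = emptyCirquent) ∨ (r = .idAx ∧ ∃ F, C = idCirquent F)
  | un C r p => p.Valid ∧ unRel r p.concl C
  | bin C r p q => p.Valid ∧ q.Valid ∧ r = .mix ∧ MixStep p.concl q.concl C

/-- Number of applications of rule `r` in the proof. -/
def count (r : RuleName) : PTree → ℕ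
  | leaf _ r' => if r' = r then 1 else 0
  | un _ r' p => (if r' = r then 1 else 0) + p.count r
  | bin _ r' p q => (if r' = r then 1 else 0) + p.count r + q.count r

/-- The cirquents occurring in the proof. -/
def cirquents : PTree → List Cirquent
  | leaf C _ => [C]
  | un C _ p => C :: p.cirquents
  | bin C _ p q => C :: (p.cirquents ++ q.cirquents)

/-- Total number of rule applications (nodes). -/
def nodes : PTree → ℕ
  | leaf _ _ => 1
  | un _ _ p => p.nodes + 1
  | bin _ _ p q => p.nodes + q.nodes + 1

/-- Number of leaves of the proof tree. -/
def leavesCount : PTree → ℕ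
  | leaf _ _ => 1
  | un _ _ p => p.leavesCount
  | bin _ _ p q => p.leavesCount + q.leavesCount

end PTree

/-- A proof uses no duplication. -/
def DupFree (p : PTree) : Prop :=
  p.count RuleName.dupDown = 0 ∧ p.count RuleName.dupUp = 0

/-- Provability of a cirquent in CL5. -/
def ProvesC (C : Cirquent) : Prop := ∃ p : PTree, p.Valid ∧ p.concl = C

/-- Provability of a formula in CL5. -/
def ProvesCL5 (F : Fml) : Prop := ∃ p : PTree, p.Valid ∧ p.concl = fmlCirquent F

/-- Provability of a formula in CL5⁻ (CL5 without duplication). -/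
def ProvesCL5m (F : Fml) : Prop :=
  ∃ p : PTree, p.Valid ∧ DupFree p ∧ p.concl = fmlCirquent F

/-- Number of arcs of a cirquent (sum of the sizes of its ogroups). -/
def Cirquent.arcs (C : Cirquent) : ℕ := (C.groups.map Finset.card).sum

/-- Size of a cirquent: sum of the lengths of the oformulas in its pool plus
the sum of the sizes of its ogroups. -/
def Cirquent.size (C : Cirquent) : ℕ := (C.pool.map Fml.len).sum + C.arcs

/-- Size of a proof: the sum of the sizes of the cirquents it contains. -/
def PTree.size (p : PTree) : ℕ := (p.cirquents.map Cirquent.size).sum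

/-- Total number of positive occurrences of atoms in the pool. -/
def Cirquent.poolPosOcc (C : Cirquent) : ℕ := (C.pool.map Fml.posOcc).sum

end CirquentCalc

namespace CirquentCalc

/-! Vertex-cover reduction. Atom 0 is the fresh atom `q`; the vertices
`v₁, …, vₙ` of the graph double as the atoms `1, …, n`. -/

/-- Disjunction of a list of formulas (with a default for the empty list). -/
def bigOrD (d : Fml) : List Fml → Fml
  | [] => d
  | [a] => a
  | a :: b :: r => Fml.or a (bigOrD d (b :: r))

/-- Conjunction of a list of formulas (with a default for the empty list). -/
def bigAndD (d : Fml) : List Fml → Fml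
  | [] => d
  | [a] => a
  | a :: b :: r => Fml.and a (bigAndD d (b :: r))

/-- ⊥, understood as an abbreviation of P ∧ ¬P (used only in degenerate cases). -/
def botG : Fml := Fml.and (Fml.pos 0) (Fml.neg 0)

/-- ⊤, understood as an abbreviation of P ∨ ¬P (used only in degenerate cases). -/
def topG : Fml := Fml.or (Fml.pos 0) (Fml.neg 0)

/-- Degree of vertex `j`: number of edges incident to it. -/
def deg (E : List (ℕ × ℕ)) (j : ℕ) : ℕ :=
  (E.filter fun e => e.1 == j || e.2 == j).length

/-- Ψ(k) := q ∨ ⋯ ∨ q (k copies). -/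
def PsiF (k : ℕ) : Fml := bigOrD botG (List.replicate k (Fml.pos 0))

/-- Θ(V,E) := ⋁ⱼ (¬q ∧ (¬vⱼ ∨ ⋯ ∨ ¬vⱼ)) with deg(vⱼ) copies of ¬vⱼ. -/
def ThetaF (n : ℕ) (E : List (ℕ × ℕ)) : Fml :=
  bigOrD botG ((List.range n).map fun j =>
    Fml.and (Fml.neg 0)
      (bigOrD botG (List.replicate (deg E (j + 1)) (Fml.neg (j + 1)))))

/-- Ω(E) := (e₁¹ ∨ e₁²) ∧ ⋯ ∧ (eₘ¹ ∨ eₘ²). -/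
def OmegaF (E : List (ℕ × ℕ)) : Fml :=
  bigAndD topG (E.map fun e => Fml.or (Fml.pos e.1) (Fml.pos e.2))

/-- f(V,E,k) := Ψ(k) ∨ Θ(V,E) ∨ Ω(E). -/
def fGraph (n : ℕ) (E : List (ℕ × ℕ)) (k : ℕ) : Fml :=
  Fml.or (PsiF k) (Fml.or (ThetaF n E) (OmegaF E))

/-- The graph with vertices {1,…,n} and edge list E has a vertex cover of size
at most k. -/
def HasVC (n : ℕ) (E : List (ℕ × ℕ)) (k : ℕ) : Prop :=
  ∃ U : Finset ℕ, U ⊆ Finset.Icc 1 n ∧ U.card ≤ k ∧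
    ∀ e ∈ E, e.1 ∈ U ∨ e.2 ∈ U

/-- E is a list of edges on the vertices {1,…,n}: each edge is an (unordered)
pair of distinct vertices. -/
def IsGraph (n : ℕ) (E : List (ℕ × ℕ)) : Prop :=
  ∀ e ∈ E, e.1 ∈ Finset.Icc 1 n ∧ e.2 ∈ Finset.Icc 1 n ∧ e.1 ≠ e.2

end CirquentCalc

/-! Write the preimage of `f(V,E,k)` as `ψ ∨ (⋁ⱼ (¬rⱼ ∧ θⱼ) ∨ ω)` with `ψ = a₁ ∨ ⋯ ∨ a_k`.
Each empty disjunction `⊥ = q ∧ ¬q` of `f(V,E,k)` has a preimage `α ∧ ¬γ`; call `α` linked to `γ`.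
Put `vⱼ` into the cover when a chain of links leads from `rⱼ` to some `aᵢ`. In a normal formula
every atom occurs negatively at most once, so chains starting at distinct `rⱼ` end at distinct
`aᵢ`, and the cover has at most `k` vertices. Given an edge with preimage clause `α ∨ β`, make
`α`, `β`, the `aᵢ` and everything linked to them false and all else true. Then `ψ`, `ω` and every
`α ∧ ¬γ` are false, so some `¬rⱼ ∧ θⱼ` is true: `rⱼ` is false, putting `vⱼ` into the cover, and
a true literal `¬x` of `θⱼ`, where `x` is renamed to `vⱼ`, must be `¬α` or `¬β`. -/

namespace CirquentCalc

open Fml hiding and or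
open Relation Finset

theorem eq_of_sum_le_one {ι : Type*} [Fintype ι] {f : ι → ℕ} (h : ∑ i, f i ≤ 1) {i j : ι}
    (hi : 1 ≤ f i) (hj : 1 ≤ f j) : i = j := by
  by_contra hne
  have := add_le_sum (fun i _ => Nat.zero_le (f i)) (mem_univ i) (mem_univ j) hne
  omega

theorem eq_of_reflTransGen_of_leftUnique {α : Type*} {r : α → α → Prop}
    (hr : Relator.LeftUnique r) {a a' b : α} (ha : ∀ x, ¬ r x a) (ha' : ∀ x, ¬ r x a')
    (h : ReflTransGen r a b) (h' : ReflTransGen r a' b) : a = a' := by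
  have hr' : Relator.RightUnique (Function.swap r) := fun _ _ _ h h' => hr h h'
  rcases (reflTransGen_swap.mpr h).total_of_right_unique hr' (reflTransGen_swap.mpr h')
    with h'' | h''
  · rcases (reflTransGen_swap.mp h'').cases_tail with rfl | ⟨c, -, hc⟩
    · rfl
    · exact absurd hc (ha c)
  · rcases (reflTransGen_swap.mp h'').cases_tail with rfl | ⟨c, -, hc⟩
    · rfl
    · exact absurd hc (ha' c)

theorem card_le_of_reflTransGen {α ι : Type*} {r : α → α → Prop} (hr : Relator.LeftUnique r)
    {ρ : ι → α} (hρ : Function.Injective ρ) (hρr : ∀ j x, ¬ r x (ρ j)) {k : ℕ} (a : Fin k → α)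
    (S : Finset ι) (hS : ∀ j ∈ S, ∃ i, ReflTransGen r (ρ j) (a i)) : #S ≤ k := by
  choose f hf using fun j : S => hS j j.2
  have hf_inj : Function.Injective f := fun j j' hjj' => Subtype.ext <| hρ <|
    eq_of_reflTransGen_of_leftUnique hr (hρr j) (hρr j') (hf j) (hjj' ▸ hf j')
  simpa using Fintype.card_le_of_injective f hf_inj

theorem bigOrD_cons {d a : Fml} {l : List Fml} (hl : l ≠ []) :
    bigOrD d (a :: l) = .or a (bigOrD d l) := by
  cases l
  · contradiction
  · rfl

theorem bigAndD_cons {d a : Fml} {l : List Fml} (hl : l ≠ []) :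
    bigAndD d (a :: l) = .and a (bigAndD d l) := by
  cases l
  · contradiction
  · rfl

theorem ofFn_ne_nil {α : Type*} {m : ℕ} (hm : m ≠ 0) (f : Fin m → α) : List.ofFn f ≠ [] :=
  List.ofFn_eq_nil_iff.not.mpr hm

theorem eval_bigOrD (d : Fml) (v : ℕ → Bool) :
    ∀ {L : List Fml}, L ≠ [] → (bigOrD d L).eval v = L.any (eval v)
  | [_], _ => by simp [bigOrD]
  | a :: b :: l, _ => by
    simp [bigOrD_cons, eval, eval_bigOrD d v (L := b :: l)]

theorem eval_bigAndD (d : Fml) (v : ℕ → Bool) :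
    ∀ {L : List Fml}, L ≠ [] → (bigAndD d L).eval v = L.all (eval v)
  | [_], _ => by simp [bigAndD]
  | a :: b :: l, _ => by
    simp [bigAndD_cons, eval, eval_bigAndD d v (L := b :: l)]

theorem eval_bigOrD_ofFn {m : ℕ} (hm : m ≠ 0) (d : Fml) (c : Fin m → Fml) (v : ℕ → Bool) :
    (bigOrD d (List.ofFn c)).eval v = true ↔ ∃ i, (c i).eval v = true := by
  simp [eval_bigOrD d v (ofFn_ne_nil hm c), List.mem_ofFn]

theorem eval_bigAndD_ofFn {m : ℕ} (hm : m ≠ 0) (d : Fml) (c : Fin m → Fml) (v : ℕ → Bool) :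
    (bigAndD d (List.ofFn c)).eval v = true ↔ ∀ i, (c i).eval v = true := by
  simp [eval_bigAndD d v (ofFn_ne_nil hm c), List.mem_ofFn]

theorem sum_cNeg_le_cNeg_bigOrD (d : Fml) (y : ℕ) :
    ∀ L : List Fml, (L.map (cNeg y)).sum ≤ (bigOrD d L).cNeg y
  | [] => by simp
  | [_] => by simp [bigOrD]
  | a :: b :: l => by
    have := sum_cNeg_le_cNeg_bigOrD d y (b :: l)
    rw [bigOrD_cons (by simp), cNeg, List.map_cons, List.sum_cons]
    omega

section Renaming

variable {s : ℕ → ℕ}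

theorem subst_eq_pos {C : Fml} {t : ℕ} (h : C.subst (pos ∘ s) = pos t) :
    ∃ a, C = pos a ∧ s a = t := by
  cases C <;> simp_all [subst, negate]

theorem subst_eq_neg {C : Fml} {t : ℕ} (h : C.subst (pos ∘ s) = neg t) :
    ∃ a, C = neg a ∧ s a = t := by
  cases C <;> simp_all [subst, negate]

theorem subst_eq_and {C P Q : Fml} (h : C.subst (pos ∘ s) = .and P Q) :
    ∃ C₁ C₂, C = .and C₁ C₂ ∧ C₁.subst (pos ∘ s) = P ∧ C₂.subst (pos ∘ s) = Q := by
  cases C <;> simp_all [subst, negate]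

theorem subst_eq_or {C P Q : Fml} (h : C.subst (pos ∘ s) = .or P Q) :
    ∃ C₁ C₂, C = .or C₁ C₂ ∧ C₁.subst (pos ∘ s) = P ∧ C₂.subst (pos ∘ s) = Q := by
  cases C <;> simp_all [subst, negate]

theorem subst_eq_bigOrD_ofFn {d : Fml} :
    ∀ {m : ℕ} {g : Fin m → Fml} {C : Fml}, m ≠ 0 →
      C.subst (pos ∘ s) = bigOrD d (List.ofFn g) →
      ∃ c : Fin m → Fml, C = bigOrD d (List.ofFn c) ∧ ∀ i, (c i).subst (pos ∘ s) = g i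
  | 1, g, C, _, h => ⟨fun _ => C, rfl, fun i => by
      rw [Subsingleton.elim i 0]; simpa [bigOrD] using h⟩
  | m + 2, g, C, _, h => by
    rw [List.ofFn_succ, bigOrD_cons (ofFn_ne_nil (by omega) _)] at h
    obtain ⟨C₁, C₂, rfl, h₁, h₂⟩ := subst_eq_or h
    obtain ⟨c, rfl, hc⟩ := subst_eq_bigOrD_ofFn (m := m + 1) (by omega) h₂
    refine ⟨Fin.cons C₁ c, ?_, Fin.cases h₁ hc⟩
    rw [List.ofFn_succ (f := Fin.cons C₁ c), bigOrD_cons (ofFn_ne_nil (by omega) _)]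
    simp

theorem subst_eq_bigAndD_ofFn {d : Fml} :
    ∀ {m : ℕ} {g : Fin m → Fml} {C : Fml}, m ≠ 0 →
      C.subst (pos ∘ s) = bigAndD d (List.ofFn g) →
      ∃ c : Fin m → Fml, C = bigAndD d (List.ofFn c) ∧ ∀ i, (c i).subst (pos ∘ s) = g i
  | 1, g, C, _, h => ⟨fun _ => C, rfl, fun i => by
      rw [Subsingleton.elim i 0]; simpa [bigAndD] using h⟩
  | m + 2, g, C, _, h => by
    rw [List.ofFn_succ, bigAndD_cons (ofFn_ne_nil (by omega) _)] at h
    obtain ⟨C₁, C₂, rfl, h₁, h₂⟩ := subst_eq_and h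
    obtain ⟨c, rfl, hc⟩ := subst_eq_bigAndD_ofFn (m := m + 1) (by omega) h₂
    refine ⟨Fin.cons C₁ c, ?_, Fin.cases h₁ hc⟩
    rw [List.ofFn_succ (f := Fin.cons C₁ c), bigAndD_cons (ofFn_ne_nil (by omega) _)]
    simp

theorem subst_eq_bigOrD_replicate {C ℓ : Fml} {m : ℕ}
    (h : C.subst (pos ∘ s) = bigOrD botG (List.replicate m ℓ)) :
    (m = 0 ∧ ∃ α γ, C = .and (pos α) (neg γ)) ∨
      (m ≠ 0 ∧ ∃ c : Fin m → Fml, C = bigOrD botG (List.ofFn c) ∧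
        ∀ i, (c i).subst (pos ∘ s) = ℓ) := by
  rcases eq_or_ne m 0 with rfl | hm
  · obtain ⟨C₁, C₂, rfl, h₁, h₂⟩ := subst_eq_and h
    obtain ⟨α, rfl, -⟩ := subst_eq_pos h₁
    obtain ⟨γ, rfl, -⟩ := subst_eq_neg h₂
    exact Or.inl ⟨rfl, α, γ, rfl⟩
  · rw [← List.ofFn_const] at h
    exact Or.inr ⟨hm, subst_eq_bigOrD_ofFn hm h⟩

end Renaming

theorem and_eq_bigOrD_replicate {P Q ℓ : Fml} {m : ℕ} (hℓ : ∀ P Q, ℓ ≠ .and P Q)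
    (h : .and P Q = bigOrD botG (List.replicate m ℓ)) : P = pos 0 ∧ Q = neg 0 := by
  match m with
  | 0 => simpa [bigOrD, botG] using h
  | 1 => exact absurd h.symm (hℓ P Q)
  | m + 2 => simp [List.replicate_succ, bigOrD] at h

theorem exists_eval_eq_false_of_subst_eq_OmegaF {s : ℕ → ℕ} {E : List (ℕ × ℕ)} {ω : Fml}
    (h : ω.subst (pos ∘ s) = OmegaF E) {e : ℕ × ℕ} (he : e ∈ E) :
    ∃ α β, s α = e.1 ∧ s β = e.2 ∧
      ∀ v : ℕ → Bool, v α = false → v β = false → ω.eval v = false := by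
  obtain ⟨i, rfl⟩ := List.mem_iff_get.mp he
  have hE : E.length ≠ 0 := (Fin.pos i).ne'
  rw [OmegaF, show ∀ f : ℕ × ℕ → Fml, E.map f = List.ofFn fun i => f (E.get i) from
    fun f => List.ext_getElem (by simp) (by simp)] at h
  obtain ⟨c, rfl, hc⟩ := subst_eq_bigAndD_ofFn hE h
  obtain ⟨C₁, C₂, hci, h₁, h₂⟩ := subst_eq_or (hc i)
  obtain ⟨α, rfl, hα⟩ := subst_eq_pos h₁
  obtain ⟨β, rfl, hβ⟩ := subst_eq_pos h₂
  refine ⟨α, β, hα, hβ, fun v hvα hvβ => ?_⟩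
  rw [Bool.eq_false_iff, Ne, eval_bigAndD_ofFn hE]
  exact fun hall => by simpa [hci, eval, hvα, hvβ] using hall i

/-- A formula `B` with `B.subst (pos ∘ s) = f(V,E,k)`, cut along the outer structure
`Ψ(k) ∨ (⋁ⱼ (¬q ∧ (¬vⱼ ∨ ⋯ ∨ ¬vⱼ)) ∨ Ω(E))` of `f(V,E,k)`. -/
structure Preimage (n k : ℕ) (E : List (ℕ × ℕ)) (s : ℕ → ℕ) where
  ψ : Fml
  r : Fin n → ℕ
  θ : Fin n → Fml
  ω : Fml
  subst_ψ : ψ.subst (pos ∘ s) = PsiF k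
  r_eq_zero : ∀ j, s (r j) = 0
  subst_θ : ∀ j : Fin n,
    (θ j).subst (pos ∘ s) = bigOrD botG (List.replicate (deg E (j + 1)) (neg (j + 1)))
  subst_ω : ω.subst (pos ∘ s) = OmegaF E

namespace Preimage

variable {n k : ℕ} {E : List (ℕ × ℕ)} {s : ℕ → ℕ} (P : Preimage n k E s)

def disjunct (j : Fin n) : Fml := .and (neg (P.r j)) (P.θ j)

def toFml : Fml := .or P.ψ (.or (bigOrD botG (List.ofFn P.disjunct)) P.ω)

theorem exists_toFml_eq {B : Fml} (hn : n ≠ 0) (h : B.subst (pos ∘ s) = fGraph n E k) :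
    ∃ P : Preimage n k E s, P.toFml = B := by
  obtain ⟨ψ, B', rfl, hψ, h'⟩ := subst_eq_or h
  obtain ⟨B₂, ω, rfl, h₂, hω⟩ := subst_eq_or h'
  rw [ThetaF, show ∀ f : ℕ → Fml, (List.range n).map f = List.ofFn fun j : Fin n => f j from
    fun f => List.ext_getElem (by simp) (by simp)] at h₂
  obtain ⟨c, rfl, hc⟩ := subst_eq_bigOrD_ofFn hn h₂
  choose c₁ θ hcθ hc₁ hθ using fun j => subst_eq_and (hc j)
  choose r hr hr₀ using fun j => subst_eq_neg (hc₁ j)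
  obtain rfl : c = fun j => .and (neg (r j)) (θ j) := funext fun j => by rw [hcθ, hr]
  exact ⟨⟨ψ, r, θ, ω, hψ, hr₀, hθ, hω⟩, rfl⟩

/-- `α ∧ ¬γ` is `ψ` or some `θ j`: a preimage of one of the `⊥ = q ∧ ¬q` standing for the empty
disjunctions `Ψ(0)` and `¬vⱼ ∨ ⋯ ∨ ¬vⱼ` with `deg vⱼ = 0`. -/
def Link (α γ : ℕ) : Prop :=
  P.ψ = .and (pos α) (neg γ) ∨ ∃ j, P.θ j = .and (pos α) (neg γ)

variable {P}

theorem Link.eq_zero {α γ : ℕ} (h : P.Link α γ) : s α = 0 ∧ s γ = 0 := by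
  have key : ∀ {ℓ : Fml} {m : ℕ}, (∀ P Q, ℓ ≠ .and P Q) →
      (Fml.and (pos α) (neg γ)).subst (pos ∘ s) = bigOrD botG (List.replicate m ℓ) →
      s α = 0 ∧ s γ = 0 := fun hℓ h => by
    obtain ⟨hα, hγ⟩ := and_eq_bigOrD_replicate hℓ (by simpa [subst, negate] using h)
    exact ⟨pos.inj hα, neg.inj hγ⟩
  rcases h with hψ | ⟨j, hθ⟩
  · exact key (by simp) (hψ ▸ P.subst_ψ)
  · exact key (by simp) (hθ ▸ P.subst_θ j)

variable (P) in
def Closed (v : ℕ → Bool) : Prop := ∀ α γ, P.Link α γ → v γ = false → v α = false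

theorem Closed.eval_eq_false {v : ℕ → Bool} (hv : P.Closed v) {α γ : ℕ} (h : P.Link α γ) :
    (Fml.and (pos α) (neg γ)).eval v = false := by
  cases hγ : v γ <;> simp [eval, hγ, hv α γ h]

theorem Closed.exists_of_eval_θ {v : ℕ → Bool} (hv : P.Closed v) {j : Fin n}
    (h : (P.θ j).eval v = true) : ∃ x, s x = j + 1 ∧ v x = false := by
  rcases subst_eq_bigOrD_replicate (P.subst_θ j) with ⟨-, α, γ, hθ⟩ | ⟨hd, c, hθ, hc⟩
  · rw [hθ, hv.eval_eq_false (Or.inr ⟨j, hθ⟩)] at h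
    contradiction
  · rw [hθ, eval_bigOrD_ofFn hd] at h
    obtain ⟨i, hi⟩ := h
    obtain ⟨x, hx, hsx⟩ := subst_eq_neg (hc i)
    exact ⟨x, hsx, by simpa [hx, eval] using hi⟩

variable (P) in
/-- `a` lists the atoms of `ψ = a₁ ∨ ⋯ ∨ a_k`; for `k = 0`, `ψ` is instead a preimage `α ∧ ¬γ`
of `Ψ(0) = q ∧ ¬q`. -/
def PsiAtoms (a : Fin k → ℕ) : Prop :=
  (∀ i, s (a i) = 0) ∧ (k ≠ 0 ∧ P.ψ = bigOrD botG (List.ofFn (pos ∘ a)) ∨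
    k = 0 ∧ ∃ α γ, P.ψ = .and (pos α) (neg γ))

variable (P) in
theorem exists_psiAtoms : ∃ a, P.PsiAtoms a := by
  rcases subst_eq_bigOrD_replicate P.subst_ψ with ⟨rfl, hψ⟩ | ⟨hk, c, hψ, hc⟩
  · exact ⟨Fin.elim0, fun i => i.elim0, Or.inr ⟨rfl, hψ⟩⟩
  · choose a ha hsa using fun i => subst_eq_pos (hc i)
    exact ⟨a, hsa, Or.inl ⟨hk, by rw [hψ]; congr; funext i; exact ha i⟩⟩

theorem PsiAtoms.eval_ψ {a : Fin k → ℕ} (ha : P.PsiAtoms a) {v : ℕ → Bool} (hv : P.Closed v)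
    (hva : ∀ i, v (a i) = false) : P.ψ.eval v = false := by
  rcases ha.2 with ⟨hk, hψ⟩ | ⟨-, α, γ, hψ⟩
  · rw [hψ, Bool.eq_false_iff, Ne, eval_bigOrD_ofFn hk]
    simp [eval, hva]
  · rw [hψ]
    exact hv.eval_eq_false (Or.inl hψ)

theorem cNeg_ψ_add_sum_le (hN : Normal P.toFml) (y : ℕ) :
    P.ψ.cNeg y + ∑ j, (P.disjunct j).cNeg y ≤ 1 := by
  have h := sum_cNeg_le_cNeg_bigOrD botG y (List.ofFn P.disjunct)
  rw [List.map_ofFn, List.sum_ofFn] at h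
  have := (hN y).2
  simp only [toFml, cNeg, Function.comp_apply] at this h
  omega

theorem cNeg_ψ_add_cNeg_disjunct_le (hN : Normal P.toFml) (y : ℕ) (j : Fin n) :
    P.ψ.cNeg y + (P.disjunct j).cNeg y ≤ 1 :=
  (Nat.add_le_add_left (single_le_sum (fun _ _ => Nat.zero_le _) (mem_univ j)) _).trans
    (P.cNeg_ψ_add_sum_le hN y)

theorem eq_of_one_le_cNeg_disjunct (hN : Normal P.toFml) {y : ℕ} {j j' : Fin n}
    (hj : 1 ≤ (P.disjunct j).cNeg y) (hj' : 1 ≤ (P.disjunct j').cNeg y) : j = j' :=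
  eq_of_sum_le_one (le_of_add_le_right (P.cNeg_ψ_add_sum_le hN y)) hj hj'

theorem injective_r (hN : Normal P.toFml) : Function.Injective P.r := fun j j' h =>
  P.eq_of_one_le_cNeg_disjunct hN (y := P.r j) (by simp [disjunct, cNeg])
    (by simp [disjunct, cNeg, h])

theorem leftUnique_link (hN : Normal P.toFml) : Relator.LeftUnique P.Link := by
  intro x x' y h h'
  rcases h with hψ | ⟨j, hθ⟩ <;> rcases h' with hψ' | ⟨j', hθ'⟩
  · simpa using hψ.symm.trans hψ'
  · have := P.cNeg_ψ_add_cNeg_disjunct_le hN y j'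
    simp [disjunct, hψ, hθ', cNeg] at this
  · have := P.cNeg_ψ_add_cNeg_disjunct_le hN y j
    simp [disjunct, hψ', hθ, cNeg] at this
  · obtain rfl := P.eq_of_one_le_cNeg_disjunct hN (y := y) (j := j) (j' := j')
      (by simp [disjunct, hθ, cNeg]) (by simp [disjunct, hθ', cNeg])
    simpa using hθ.symm.trans hθ'

theorem not_link_r (hN : Normal P.toFml) (j : Fin n) (x : ℕ) : ¬ P.Link x (P.r j) := by
  rintro (hψ | ⟨j', hθ⟩)
  · have := P.cNeg_ψ_add_cNeg_disjunct_le hN (P.r j) j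
    simp [disjunct, hψ, cNeg] at this
  · obtain rfl := P.eq_of_one_le_cNeg_disjunct hN (y := P.r j) (j := j') (j' := j)
      (by simp [disjunct, hθ, cNeg]) (by simp [disjunct, cNeg])
    have := P.cNeg_ψ_add_cNeg_disjunct_le hN (P.r j') j'
    simp [disjunct, hθ, cNeg] at this

open Classical in
noncomputable def cover (a : Fin k → ℕ) : Finset ℕ :=
  image (fun j : Fin n => (j : ℕ) + 1)
    (univ.filter fun j => ∃ i, ReflTransGen P.Link (P.r j) (a i))

theorem cover_subset_Icc (a : Fin k → ℕ) : P.cover a ⊆ Icc 1 n := by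
  intro x hx
  obtain ⟨j, -, rfl⟩ := mem_image.1 hx
  exact mem_Icc.2 ⟨by omega, j.isLt⟩

theorem card_cover_le (hN : Normal P.toFml) (a : Fin k → ℕ) : #(P.cover a) ≤ k := by
  classical
  exact card_image_le.trans <| card_le_of_reflTransGen (P.leftUnique_link hN) (P.injective_r hN)
    (P.not_link_r hN) a _ fun _ hj => (mem_filter.1 hj).2

theorem fst_mem_cover_or_snd_mem_cover (hG : IsGraph n E) (hT : Tautology P.toFml)
    {a : Fin k → ℕ} (ha : P.PsiAtoms a) {e : ℕ × ℕ} (he : e ∈ E) :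
    e.1 ∈ P.cover a ∨ e.2 ∈ P.cover a := by
  classical
  obtain ⟨he₁, he₂, -⟩ := hG e he
  rw [mem_Icc] at he₁ he₂
  obtain ⟨α, β, hα, hβ, hω⟩ := exists_eval_eq_false_of_subst_eq_OmegaF P.subst_ω he
  let Refuted (x : ℕ) : Prop :=
    if s x = 0 then ∃ i, ReflTransGen P.Link x (a i) else x = α ∨ x = β
  let v (x : ℕ) : Bool := !decide (Refuted x)
  have hv (x : ℕ) : v x = false ↔ Refuted x := by simp [v]
  have hclosed : P.Closed v := by
    intro x y hxy hy
    obtain ⟨hx, hy₀⟩ := hxy.eq_zero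
    simp only [hv, Refuted, hx, hy₀, if_true] at hy ⊢
    obtain ⟨i, hi⟩ := hy
    exact ⟨i, hi.head hxy⟩
  have hψ : P.ψ.eval v = false :=
    ha.eval_ψ hclosed fun i => (hv _).2 (by simpa [Refuted, ha.1 i] using ⟨i, .refl⟩)
  have hω' : P.ω.eval v = false :=
    hω v ((hv α).2 (by simp [Refuted, hα]; omega)) ((hv β).2 (by simp [Refuted, hβ]; omega))
  obtain ⟨j, hj⟩ : ∃ j, (P.disjunct j).eval v = true := by
    have := hT v
    simp only [toFml, eval, hψ, hω', Bool.false_or, Bool.or_false] at this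
    exact (eval_bigOrD_ofFn (by omega) _ _ _).1 this
  simp only [disjunct, eval, Bool.and_eq_true, Bool.not_eq_true'] at hj
  have hrj : ∃ i, ReflTransGen P.Link (P.r j) (a i) := by
    simpa [Refuted, P.r_eq_zero j] using (hv _).1 hj.1
  obtain ⟨x, hx, hvx⟩ := hclosed.exists_of_eval_θ hj.2
  have hj_mem : (j : ℕ) + 1 ∈ P.cover a := mem_image.2 ⟨j, mem_filter.2 ⟨mem_univ j, hrj⟩, rfl⟩
  have : x = α ∨ x = β := by simpa [Refuted, hx] using (hv x).1 hvx
  rcases this with rfl | rfl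
  · exact Or.inl (hα ▸ hx ▸ hj_mem)
  · exact Or.inr (hβ ▸ hx ▸ hj_mem)

end Preimage

end CirquentCalc

open CirquentCalc

/-- If f(V,E,k) is an atomic-level instance of a normal binary
tautology, then G has a vertex cover of size at most k. -/
theorem instance_implies_vertex_cover (n k : ℕ) (E : List (ℕ × ℕ)) (hG : IsGraph n E)
    (h : ∃ B : Fml, Binary B ∧ Normal B ∧ Tautology B ∧
      AtomicInstanceOf (fGraph n E k) B) :
    HasVC n E k := by
  obtain ⟨B, -, hN, hT, σ, hσ, hB⟩ := h
  obtain ⟨s, rfl⟩ : ∃ s : ℕ → ℕ, σ = Fml.pos ∘ s := by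
    choose s hs using hσ
    exact ⟨s, funext hs⟩
  rcases eq_or_ne E [] with rfl | hE
  · exact ⟨∅, Finset.empty_subset _, by simp, by simp⟩
  have hn : n ≠ 0 := by
    obtain ⟨e, he⟩ := List.exists_mem_of_ne_nil E hE
    have := (hG e he).1
    rw [Finset.mem_Icc] at this
    omega
  obtain ⟨P, rfl⟩ := Preimage.exists_toFml_eq hn hB
  obtain ⟨a, ha⟩ := P.exists_psiAtoms
  exact ⟨P.cover a, P.cover_subset_Icc a, P.card_cover_le hN a,
    fun e he => P.fst_mem_cover_or_snd_mem_cover hG hT ha he⟩
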